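/- Let R be a discrete valuation ring with uniformizer ξ, and let A be a commutative R-algebra on which multiplication by ξ is injective. Let σ ∈ A be an element whose image in the quotient ring A/ξA is a nonzerodivisor. Then the quotient ring A/(σ) is flat as an R-module. -/

import Mathlib

/-!
Multiplication by `ξ` stays injective on `A/(σ)`: if `ξ a = b σ`, then `σ` kills `b` modulo `ξ`,
so `b = ξ c` and cancelling `ξ` gives `a = c σ`. Every nonzero element of a DVR is a unit times a
power of `ξ`, so `A/(σ)` is torsion-free over `R`, and torsion-free modules over a DVR are flat.
-/

open scoped nonZeroDivisors

theorem Ideal.isSMulRegular_quotient_span_singleton_of_mk_mem_nonZeroDivisors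
    {A : Type*} [CommRing A] {x σ : A} (hx : IsSMulRegular A x)
    (hσ : Ideal.Quotient.mk (Ideal.span {x}) σ ∈ (A ⧸ Ideal.span {x})⁰) :
    IsSMulRegular (A ⧸ Ideal.span {σ}) x := by
  refine (isSMulRegular_quotient_iff_mem_of_smul_mem _ x).mpr fun a hxa => ?_
  obtain ⟨b, hb⟩ := Ideal.mem_span_singleton'.mp hxa
  have hbσ : Ideal.Quotient.mk (Ideal.span {x}) b * Ideal.Quotient.mk _ σ = 0 := by
    rw [← map_mul, hb, Ideal.Quotient.eq_zero_iff_mem]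
    exact Ideal.mem_span_singleton'.mpr ⟨a, mul_comm a x⟩
  obtain ⟨c, rfl⟩ :=
    Ideal.mem_span_singleton'.mp (Ideal.Quotient.eq_zero_iff_mem.mp (hσ.2 _ hbσ))
  refine Ideal.mem_span_singleton'.mpr ⟨c, hx (?_ : x • (c * σ) = x • a)⟩
  rw [← hb, smul_eq_mul]
  ring

theorem IsDiscreteValuationRing.isTorsionFree_of_isSMulRegular_irreducible
    {R M : Type*} [CommRing R] [IsDomain R] [IsDiscreteValuationRing R]
    [AddCommGroup M] [Module R M] {ϖ : R} (hϖ : Irreducible ϖ) (h : IsSMulRegular M ϖ) :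
    Module.IsTorsionFree R M where
  isSMulRegular r hr := by
    obtain ⟨n, u, rfl⟩ := eq_unit_mul_pow_irreducible (isRegular_iff_ne_zero.mp hr) hϖ
    exact (u.isSMulRegular M).mul (h.pow n)

/-- Let `R` be a DVR with uniformizer `ξ`, and `A` a commutative `R`-algebra on which
multiplication by `ξ` is injective. If `σ ∈ A` has nonzerodivisor image in `A/ξA`,
then `A/(σ)` is flat over `R`. -/
theorem flat_of_fiberwise_regular_section
    (R : Type*) [CommRing R] [IsDomain R] [IsDiscreteValuationRing R] (ξ : R)
    (hunif : Ideal.span ({ξ} : Set R) = IsLocalRing.maximalIdeal R)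
    (A : Type*) [CommRing A] [Algebra R A]
    (hξ : Function.Injective fun a : A => algebraMap R A ξ * a)
    (σ : A)
    (hσ : (Ideal.Quotient.mk (Ideal.span {algebraMap R A ξ}) σ) ∈
      nonZeroDivisors (A ⧸ Ideal.span {algebraMap R A ξ})) :
    Module.Flat R (A ⧸ Ideal.span ({σ} : Set A)) := by
  have hξ_irred : Irreducible ξ :=
    (IsDiscreteValuationRing.irreducible_iff_uniformizer ξ).mpr hunif.symm
  have hξ_reg : IsSMulRegular (A ⧸ Ideal.span {σ}) ξ :=
    (isSMulRegular_algebraMap_iff A).mp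
      (Ideal.isSMulRegular_quotient_span_singleton_of_mk_mem_nonZeroDivisors hξ hσ)
  have := IsDiscreteValuationRing.isTorsionFree_of_isSMulRegular_irreducible hξ_irred hξ_reg
  infer_instance
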